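/- (Case a < 0, b < 2.) Let a < 0, b < 2, α > 0, δ > 0, μ > 0, κ < 0, T > 0, and let q₁, q₂, p₁, p₂ : [0, T) → ℝ be differentiable functions satisfying the 2-peakon ODE system with parameters a, b, with initial data p₁(0) = −α, p₂(0) = α + δ, q₁(0) = 0, q₂(0) = μ. Suppose that for all t ∈ [0, T): p₁(t) < 0, p₂(t) > 0, 0 < q₂(t) − q₁(t) ≤ μ, and L_a(q₂(t) − q₁(t)) ≤ κ, where L_a(r) = 1 − a − (1 − 3a)e^{−2r}. Then for all t ∈ [0, T): (p₂² − p₁²)′(t) > 0 and (q₂ − q₁)′(t) ≤ κ(2αδ + δ²) < 0. -/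

import Mathlib

open Real Set

/-- The 2-peakon ODE system with parameters `a`, `b`, holding (in the sense of derivatives
within `[0, T)`) at every point of `[0, T)`. `Real.sign` plays the role of `sgn`. -/
def PeakonODEOn (a b T : ℝ) (q₁ q₂ p₁ p₂ : ℝ → ℝ) : Prop :=
  ∀ t ∈ Set.Ico (0 : ℝ) T,
    HasDerivWithinAt q₁ ((1 - a) * p₁ t ^ 2 + 2 * p₁ t * p₂ t * Real.exp (-|q₁ t - q₂ t|)
      + (1 - 3 * a) * p₂ t ^ 2 * Real.exp (-(2 * |q₁ t - q₂ t|))) (Set.Ico 0 T) t ∧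
    HasDerivWithinAt q₂ ((1 - a) * p₂ t ^ 2 + 2 * p₁ t * p₂ t * Real.exp (-|q₁ t - q₂ t|)
      + (1 - 3 * a) * p₁ t ^ 2 * Real.exp (-(2 * |q₁ t - q₂ t|))) (Set.Ico 0 T) t ∧
    HasDerivWithinAt p₁ ((2 - b) * Real.sign (q₂ t - q₁ t) * p₁ t * p₂ t * Real.exp (-|q₁ t - q₂ t|)
      * (p₁ t + p₂ t * Real.exp (-|q₁ t - q₂ t|))) (Set.Ico 0 T) t ∧
    HasDerivWithinAt p₂ ((2 - b) * Real.sign (q₁ t - q₂ t) * p₁ t * p₂ t * Real.exp (-|q₁ t - q₂ t|)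
      * (p₁ t * Real.exp (-|q₁ t - q₂ t|) + p₂ t)) (Set.Ico 0 T) t

/-- `L_a(r) = 1 - a - (1 - 3a)e^{-2r}`. -/
noncomputable def Lfun (a r : ℝ) : ℝ := 1 - a - (1 - 3 * a) * Real.exp (-(2 * r))

theorem case4_collision (a b α δ μ κ T : ℝ)
    (ha : a < 0) (hb : b < 2) (hα : 0 < α) (hδ : 0 < δ) (hμ : 0 < μ) (hκ : κ < 0) (hT : 0 < T)
    (q₁ q₂ p₁ p₂ : ℝ → ℝ)
    (hsys : PeakonODEOn a b T q₁ q₂ p₁ p₂)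
    (hp₁0 : p₁ 0 = -α) (hp₂0 : p₂ 0 = α + δ) (hq₁0 : q₁ 0 = 0) (hq₂0 : q₂ 0 = μ)
    (hp₁neg : ∀ t ∈ Set.Ico (0 : ℝ) T, p₁ t < 0)
    (hp₂pos : ∀ t ∈ Set.Ico (0 : ℝ) T, 0 < p₂ t)
    (hqrange : ∀ t ∈ Set.Ico (0 : ℝ) T, 0 < q₂ t - q₁ t ∧ q₂ t - q₁ t ≤ μ)
    (hL : ∀ t ∈ Set.Ico (0 : ℝ) T, Lfun a (q₂ t - q₁ t) ≤ κ) :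
    ∀ t ∈ Set.Ico (0 : ℝ) T,
      (∃ d : ℝ, HasDerivWithinAt (fun s => p₂ s ^ 2 - p₁ s ^ 2) d (Set.Ico 0 T) t ∧ 0 < d) ∧
      (∃ d : ℝ, HasDerivWithinAt (fun s => q₂ s - q₁ s) d (Set.Ico 0 T) t ∧
        d ≤ κ * (2 * α * δ + δ ^ 2) ∧ κ * (2 * α * δ + δ ^ 2) < 0) := by
  have habs : ∀ t ∈ Set.Ico (0 : ℝ) T, |q₁ t - q₂ t| = q₂ t - q₁ t := by
    intro t ht
    have h := (hqrange t ht).1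
    rw [abs_of_neg (by linarith)]; ring
  -- derivative of p₂² - p₁², with positivity
  set F : ℝ → ℝ := fun x =>
    2 * p₂ x * ((2 - b) * Real.sign (q₁ x - q₂ x) * p₁ x * p₂ x * Real.exp (-(q₂ x - q₁ x))
      * (p₁ x * Real.exp (-(q₂ x - q₁ x)) + p₂ x))
    - 2 * p₁ x * ((2 - b) * Real.sign (q₂ x - q₁ x) * p₁ x * p₂ x * Real.exp (-(q₂ x - q₁ x))
      * (p₁ x + p₂ x * Real.exp (-(q₂ x - q₁ x)))) with hF
  have key1 : ∀ t ∈ Set.Ico (0 : ℝ) T,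
      HasDerivWithinAt (fun s => p₂ s ^ 2 - p₁ s ^ 2) (F t) (Set.Ico 0 T) t ∧ 0 < F t := by
    intro t ht
    obtain ⟨h1, h2, h3, h4⟩ := hsys t ht
    rw [habs t ht] at h3 h4
    constructor
    · have := (h4.fun_pow 2).fun_sub (h3.fun_pow 2)
      refine this.congr_deriv ?_
      simp only [hF]; push_cast; ring
    · have hQ := (hqrange t ht).1
      have hsgn1 : Real.sign (q₂ t - q₁ t) = 1 := Real.sign_of_pos hQ
      have hsgn2 : Real.sign (q₁ t - q₂ t) = -1 := Real.sign_of_neg (by linarith)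
      rw [hF]
      simp only [hsgn1, hsgn2]
      set E := Real.exp (-(q₂ t - q₁ t)) with hE
      have hE0 : 0 < E := Real.exp_pos _
      have hE1 : E < 1 := by
        rw [hE]; apply Real.exp_lt_one_iff.mpr; linarith
      have hp1 := hp₁neg t ht
      have hp2 := hp₂pos t ht
      have heq : 2 * p₂ t * ((2 - b) * (-1) * p₁ t * p₂ t * E * (p₁ t * E + p₂ t))
          - 2 * p₁ t * ((2 - b) * 1 * p₁ t * p₂ t * E * (p₁ t + p₂ t * E))
          = (2 * (2 - b) * (-(p₁ t * p₂ t)) * E) * ((p₁ t + p₂ t * E) ^ 2 + p₂ t ^ 2 * (1 - E ^ 2)) := by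
        ring
      rw [heq]
      apply mul_pos
      · exact mul_pos (by nlinarith [mul_pos (mul_pos (sub_pos.mpr hb) (neg_pos.mpr hp1)) hp2]) hE0
      · have hE2 : E ^ 2 < 1 := by nlinarith
        nlinarith [sq_nonneg (p₁ t + p₂ t * E), mul_pos (pow_pos hp2 2) (show (0:ℝ) < 1 - E ^ 2 by linarith)]
  -- monotonicity of p₂² - p₁²
  have hmono : StrictMonoOn (fun s => p₂ s ^ 2 - p₁ s ^ 2) (Set.Ico 0 T) := by
    apply strictMonoOn_of_hasDerivWithinAt_pos (convex_Ico 0 T) (f' := F)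
    · intro x hx; exact ((key1 x hx).1).continuousWithinAt
    · intro x hx
      rw [interior_Ico] at hx
      exact ((key1 x (by exact ⟨le_of_lt hx.1, hx.2⟩)).1).mono (by rw [interior_Ico]; exact Ioo_subset_Ico_self)
    · intro x hx
      rw [interior_Ico] at hx
      exact (key1 x ⟨le_of_lt hx.1, hx.2⟩).2
  have hlb : ∀ t ∈ Set.Ico (0 : ℝ) T, 2 * α * δ + δ ^ 2 ≤ p₂ t ^ 2 - p₁ t ^ 2 := by
    intro t ht
    have h0 : (0 : ℝ) ∈ Set.Ico (0 : ℝ) T := ⟨le_refl _, hT⟩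
    have hv : p₂ 0 ^ 2 - p₁ 0 ^ 2 = 2 * α * δ + δ ^ 2 := by rw [hp₁0, hp₂0]; ring
    rcases eq_or_lt_of_le ht.1 with h | h
    · rw [← h, hv]
    · have := hmono h0 ht h
      simp only at this
      linarith [hv ▸ this]
  have hX0 : (0 : ℝ) < 2 * α * δ + δ ^ 2 := by nlinarith
  intro t ht
  refine ⟨⟨F t, (key1 t ht).1, (key1 t ht).2⟩, ?_⟩
  obtain ⟨h1, h2, h3, h4⟩ := hsys t ht
  rw [habs t ht] at h1 h2
  refine ⟨_, h2.sub h1, ?_, mul_neg_of_neg_of_pos hκ hX0⟩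
  have heq : ((1 - a) * p₂ t ^ 2 + 2 * p₁ t * p₂ t * Real.exp (-(q₂ t - q₁ t))
      + (1 - 3 * a) * p₁ t ^ 2 * Real.exp (-(2 * (q₂ t - q₁ t))))
      - ((1 - a) * p₁ t ^ 2 + 2 * p₁ t * p₂ t * Real.exp (-(q₂ t - q₁ t))
      + (1 - 3 * a) * p₂ t ^ 2 * Real.exp (-(2 * (q₂ t - q₁ t))))
      = Lfun a (q₂ t - q₁ t) * (p₂ t ^ 2 - p₁ t ^ 2) := by
    rw [Lfun]; ring
  rw [heq]
  have hLt := hL t ht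
  have hXt := hlb t ht
  nlinarith
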